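/- For every value E* with 0 < E* < 2/√(2π), there exists a unique real number β_S > 0 such that F(β_S) = E*, where F(b) = φ(b)/Φ(−b) − b. -/

import Mathlib

/-!
Write `Q b = Φ(-b)` for the normal tail. Since `Q > 0`, the equation `F b = E` is equivalent to
the vanishing of `G b = φ b - (E + b) Q b`. Its derivative is `φ b (E - m b)`, where `m = Q / φ`
is the Mills ratio. The Mills ratio satisfies `m' = b m - 1`, and `b Q < φ` (the integral of
`(t - b) φ t` over `t > b` is positive) gives `b m < 1`, so `m` is strictly decreasing from
`m 0 = √(2π)/2` to `0`. Hence `G` strictly decreases up to the point `c` where `m c = E` and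
strictly increases after it towards its limit `0`: it is negative on `[c, ∞)` and, as
`G 0 = 1/√(2π) - E/2 > 0`, it has exactly one zero in `(0, c)`.
-/

open MeasureTheory Filter

/-- Standard normal density. -/
noncomputable def phi (x : ℝ) : ℝ := Real.exp (-x ^ 2 / 2) / Real.sqrt (2 * Real.pi)

/-- Standard normal cumulative distribution function. -/
noncomputable def Phi (x : ℝ) : ℝ := ∫ t in Set.Iio x, phi t

/-- Mills-type ratio. -/
noncomputable def r (b : ℝ) : ℝ := phi b / Phi (-b)

/-- The deficit transformation `F`. -/
noncomputable def F (b : ℝ) : ℝ := phi b / Phi (-b) - b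

open Set Topology Real

lemma StrictMonoOn.lt_of_tendsto_atTop {α β : Type*} [LinearOrder α] [NoMaxOrder α]
    [TopologicalSpace β] [Preorder β] [OrderClosedTopology β] {g : α → β} {c b : α} {L : β}
    (hg : StrictMonoOn g (Ici c)) (hlim : Tendsto g atTop (𝓝 L)) (hb : c ≤ b) : g b < L := by
  have : Nonempty α := ⟨c⟩
  obtain ⟨b', hbb'⟩ := exists_gt b
  refine (hg hb (hb.trans hbb'.le) hbb').trans_le (ge_of_tendsto hlim ?_)
  filter_upwards [eventually_ge_atTop b'] with x hx
  exact hg.monotoneOn (hb.trans hbb'.le) ((hb.trans hbb'.le).trans hx) hx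

lemma existsUnique_zero_of_strictAntiOn_of_strictMonoOn {g : ℝ → ℝ} {a c : ℝ}
    (hcont : ContinuousOn g (Icc a c)) (ha : 0 < g a) (hanti : StrictAntiOn g (Icc a c))
    (hmono : StrictMonoOn g (Ici c)) (hlim : Tendsto g atTop (𝓝 0)) :
    ∃! b, a < b ∧ g b = 0 := by
  have hneg : ∀ b, c ≤ b → g b < 0 := fun b hb => hmono.lt_of_tendsto_atTop hlim hb
  have hac : a ≤ c := le_of_not_ge fun hca => (hneg a hca).not_gt ha
  obtain ⟨b, hb, hgb⟩ := intermediate_value_Icc' hac hcont ⟨(hneg c le_rfl).le, ha.le⟩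
  refine ⟨b, ⟨hb.1.lt_of_ne ?_, hgb⟩, fun y ⟨hay, hgy⟩ => ?_⟩
  · rintro rfl
    exact ha.ne' hgb
  · have hyc : y ≤ c := le_of_not_ge fun hcy => (hneg y hcy).ne hgy
    exact hanti.injOn ⟨hay.le, hyc⟩ hb (hgy.trans hgb.symm)

lemma setIntegral_Ioi_pos {f : ℝ → ℝ} {b : ℝ} (hf : ∀ t ∈ Ioi b, 0 < f t)
    (hint : IntegrableOn f (Ioi b)) : 0 < ∫ t in Ioi b, f t := by
  have hnonneg : 0 ≤ᵐ[volume.restrict (Ioi b)] f :=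
    (ae_restrict_iff' measurableSet_Ioi).2 (ae_of_all _ fun t ht => (hf t ht).le)
  rw [setIntegral_pos_iff_support_of_nonneg_ae hnonneg hint]
  have hsub : Ioi b ⊆ Function.support f ∩ Ioi b := fun t ht => ⟨(hf t ht).ne', ht⟩
  exact (measure_mono hsub).trans_lt' (by simp)

lemma phi_eq_gaussianPDFReal : phi = ProbabilityTheory.gaussianPDFReal 0 1 := by
  ext x
  simp [phi, ProbabilityTheory.gaussianPDFReal, div_eq_inv_mul]

lemma phi_pos (x : ℝ) : 0 < phi x := by
  unfold phi
  positivity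

lemma phi_neg (x : ℝ) : phi (-x) = phi x := by
  simp [phi]

lemma phi_zero : phi 0 = (√(2 * π))⁻¹ := by
  simp [phi]

lemma continuous_phi : Continuous phi := by
  unfold phi
  fun_prop

lemma integrable_phi : Integrable phi :=
  phi_eq_gaussianPDFReal ▸ ProbabilityTheory.integrable_gaussianPDFReal 0 1

lemma integral_phi : ∫ x, phi x = 1 :=
  phi_eq_gaussianPDFReal ▸ ProbabilityTheory.integral_gaussianPDFReal_eq_one 0 one_ne_zero

lemma hasDerivAt_phi (x : ℝ) : HasDerivAt phi (-x * phi x) x := by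
  have h : HasDerivAt (fun y : ℝ => -y ^ 2 / 2) (-x) x :=
    ((hasDerivAt_pow 2 x).neg.div_const 2).congr_deriv (by ring)
  unfold phi
  exact (h.exp.div_const √(2 * π)).congr_deriv (by ring)

lemma tendsto_phi_atTop : Tendsto phi atTop (𝓝 0) := by
  have h : Tendsto (fun x : ℝ => -x ^ 2 / 2) atTop atBot :=
    (tendsto_neg_atTop_atBot.comp (tendsto_pow_atTop two_ne_zero)).atBot_div_const two_pos
  unfold phi
  simpa using (Real.tendsto_exp_atBot.comp h).div_const √(2 * π)

lemma integrable_id_mul_phi : Integrable fun t => t * phi t := by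
  have h := (integrable_mul_exp_neg_mul_sq (one_half_pos (α := ℝ))).mul_const (√(2 * π))⁻¹
  refine h.congr (ae_of_all _ fun t => ?_)
  simp only [phi]
  ring_nf

lemma integral_Ioi_id_mul_phi (b : ℝ) : ∫ t in Ioi b, t * phi t = phi b := by
  have hderiv : ∀ x ∈ Ici b, HasDerivAt (fun t => -phi t) (x * phi x) x := fun x _ =>
    (hasDerivAt_phi x).neg.congr_deriv (by ring)
  have h := integral_Ioi_of_hasDerivAt_of_tendsto' hderiv integrable_id_mul_phi.integrableOn
    (by simpa using tendsto_phi_atTop.neg)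
  simpa using h

lemma Phi_eq_integral_Iic (x : ℝ) : Phi x = ∫ t in Iic x, phi t :=
  setIntegral_congr_set Iio_ae_eq_Iic

lemma Phi_neg_eq_integral_Ioi (b : ℝ) : Phi (-b) = ∫ t in Ioi b, phi t := by
  rw [Phi_eq_integral_Iic, ← integral_comp_neg_Ioi]
  simp only [phi_neg]

lemma Phi_neg_pos (b : ℝ) : 0 < Phi (-b) := by
  rw [Phi_neg_eq_integral_Ioi]
  exact setIntegral_Ioi_pos (fun t _ => phi_pos t) integrable_phi.integrableOn

lemma Phi_zero : Phi 0 = 1 / 2 := by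
  have h : Phi 0 + Phi (-0) = 1 := by
    rw [Phi_eq_integral_Iic, Phi_neg_eq_integral_Ioi, intervalIntegral.integral_Iic_add_Ioi
      integrable_phi.integrableOn integrable_phi.integrableOn, integral_phi]
  rw [neg_zero] at h
  linarith

lemma hasDerivAt_Phi (x : ℝ) : HasDerivAt Phi (phi x) x := by
  have h : Phi = fun y => Phi 0 + ∫ t in (0 : ℝ)..y, phi t := by
    ext y
    rw [Phi_eq_integral_Iic, Phi_eq_integral_Iic, ← intervalIntegral.integral_Iic_sub_Iic
      integrable_phi.integrableOn integrable_phi.integrableOn]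
    ring
  rw [h]
  exact (intervalIntegral.integral_hasDerivAt_right integrable_phi.intervalIntegrable
    (continuous_phi.stronglyMeasurableAtFilter _ _) continuous_phi.continuousAt).const_add _

lemma hasDerivAt_Phi_neg (b : ℝ) : HasDerivAt (fun b => Phi (-b)) (-phi b) b := by
  simpa [Function.comp_def, phi_neg] using (hasDerivAt_Phi (-b)).comp b (hasDerivAt_neg b)

lemma continuous_Phi : Continuous Phi :=
  continuous_iff_continuousAt.2 fun x => (hasDerivAt_Phi x).continuousAt

lemma mul_Phi_neg_lt_phi (b : ℝ) : b * Phi (-b) < phi b := by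
  have hint : IntegrableOn (fun t => (t - b) * phi t) (Ioi b) := by
    refine (integrable_id_mul_phi.sub (integrable_phi.const_mul b)).integrableOn.congr_fun
      (fun t _ => ?_) measurableSet_Ioi
    simp only [Pi.sub_apply]
    ring
  have hpos := setIntegral_Ioi_pos (fun t ht => mul_pos (sub_pos.2 ht) (phi_pos t)) hint
  simp only [sub_mul] at hpos
  rw [integral_sub integrable_id_mul_phi.integrableOn (integrable_phi.const_mul b).integrableOn,
    integral_Ioi_id_mul_phi, integral_const_mul, ← Phi_neg_eq_integral_Ioi] at hpos
  linarith

noncomputable def millsRatio (b : ℝ) : ℝ := Phi (-b) / phi b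

lemma continuous_millsRatio : Continuous millsRatio :=
  (continuous_Phi.comp continuous_neg).div continuous_phi fun x => (phi_pos x).ne'

lemma millsRatio_zero : millsRatio 0 = √(2 * π) / 2 := by
  rw [millsRatio, neg_zero, Phi_zero, phi_zero]
  field_simp

lemma mul_millsRatio_lt_one (b : ℝ) : b * millsRatio b < 1 := by
  rw [millsRatio, mul_div_assoc', div_lt_one (phi_pos b)]
  exact mul_Phi_neg_lt_phi b

lemma hasDerivAt_millsRatio (b : ℝ) : HasDerivAt millsRatio (b * millsRatio b - 1) b := by
  have hphi := (phi_pos b).ne'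
  refine ((hasDerivAt_Phi_neg b).div (hasDerivAt_phi b) hphi).congr_deriv ?_
  rw [millsRatio]
  field_simp
  ring

lemma strictAnti_millsRatio : StrictAnti millsRatio :=
  strictAnti_of_hasDerivAt_neg hasDerivAt_millsRatio fun b => sub_neg.2 (mul_millsRatio_lt_one b)

lemma exists_millsRatio_eq {E : ℝ} (hE0 : 0 < E) (hE : E < millsRatio 0) :
    ∃ c, millsRatio c = E := by
  have hlt : millsRatio E⁻¹ < E := by
    simpa [inv_mul_lt_iff₀ hE0] using mul_millsRatio_lt_one E⁻¹
  obtain ⟨c, -, hc⟩ := intermediate_value_Icc' (inv_pos.2 hE0).le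
    continuous_millsRatio.continuousOn ⟨hlt.le, hE.le⟩
  exact ⟨c, hc⟩

lemma two_div_sqrt_two_pi_lt_millsRatio_zero : 2 / √(2 * π) < millsRatio 0 := by
  have hs : 0 < √(2 * π) := by positivity
  have hsq : √(2 * π) ^ 2 = 2 * π := Real.sq_sqrt (by positivity)
  rw [millsRatio_zero, div_lt_div_iff₀ hs two_pos]
  nlinarith [pi_gt_three]

noncomputable def deficitGap (E b : ℝ) : ℝ := phi b - (E + b) * Phi (-b)

lemma F_eq_iff_deficitGap_eq_zero {E b : ℝ} : F b = E ↔ deficitGap E b = 0 := by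
  rw [F, deficitGap, sub_eq_iff_eq_add, div_eq_iff (Phi_neg_pos b).ne', sub_eq_zero]

lemma continuous_deficitGap (E : ℝ) : Continuous (deficitGap E) :=
  continuous_phi.sub ((continuous_const.add continuous_id).mul (continuous_Phi.comp continuous_neg))

lemma hasDerivAt_deficitGap (E b : ℝ) :
    HasDerivAt (deficitGap E) (phi b * (E - millsRatio b)) b := by
  have h := (hasDerivAt_phi b).sub
    (((hasDerivAt_const b E).add (hasDerivAt_id b)).mul (hasDerivAt_Phi_neg b))
  refine h.congr_deriv ?_
  rw [millsRatio, mul_sub, mul_div_cancel₀ _ (phi_pos b).ne', Pi.add_apply, id]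
  ring

lemma deficitGap_strictAntiOn {E c : ℝ} (hc : millsRatio c = E) :
    StrictAntiOn (deficitGap E) (Iic c) :=
  strictAntiOn_of_hasDerivWithinAt_neg (convex_Iic c) (continuous_deficitGap E).continuousOn
    (fun x _ => (hasDerivAt_deficitGap E x).hasDerivWithinAt) fun x hx => by
      rw [interior_Iic] at hx
      exact mul_neg_of_pos_of_neg (phi_pos x) (sub_neg.2 (hc ▸ strictAnti_millsRatio hx))

lemma deficitGap_strictMonoOn {E c : ℝ} (hc : millsRatio c = E) :
    StrictMonoOn (deficitGap E) (Ici c) :=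
  strictMonoOn_of_hasDerivWithinAt_pos (convex_Ici c) (continuous_deficitGap E).continuousOn
    (fun x _ => (hasDerivAt_deficitGap E x).hasDerivWithinAt) fun x hx => by
      rw [interior_Ici] at hx
      exact mul_pos (phi_pos x) (sub_pos.2 (hc ▸ strictAnti_millsRatio hx))

lemma tendsto_Phi_neg_atTop : Tendsto (fun b => Phi (-b)) atTop (𝓝 0) := by
  refine squeeze_zero' (.of_forall fun b => (Phi_neg_pos b).le) ?_ tendsto_phi_atTop
  filter_upwards [eventually_ge_atTop 1] with b hb
  nlinarith [mul_Phi_neg_lt_phi b, Phi_neg_pos b]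

lemma tendsto_mul_Phi_neg_atTop : Tendsto (fun b => b * Phi (-b)) atTop (𝓝 0) := by
  refine squeeze_zero' ?_ (.of_forall fun b => (mul_Phi_neg_lt_phi b).le) tendsto_phi_atTop
  filter_upwards [eventually_ge_atTop 0] with b hb
  exact mul_nonneg hb (Phi_neg_pos b).le

lemma tendsto_deficitGap_atTop (E : ℝ) : Tendsto (deficitGap E) atTop (𝓝 0) := by
  have h := tendsto_phi_atTop.sub ((tendsto_Phi_neg_atTop.const_mul E).add tendsto_mul_Phi_neg_atTop)
  simp only [mul_zero, add_zero, sub_zero] at h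
  exact h.congr fun b => by rw [deficitGap]; ring

lemma deficitGap_zero_pos {E : ℝ} (hE : E < 2 / √(2 * π)) : 0 < deficitGap E 0 := by
  rw [deficitGap, neg_zero, Phi_zero, phi_zero, add_zero]
  rw [lt_div_iff₀ (by positivity)] at hE
  have hs : 0 < √(2 * π) := by positivity
  rw [sub_pos, ← one_div, lt_div_iff₀ hs]
  linarith

/-- For every `E*` with `0 < E* < 2/√(2π)`, there is a unique `β_S > 0`
with `F(β_S) = E*`. -/
theorem severity_index_exists_unique (E : ℝ) (hE0 : 0 < E)
    (hE1 : E < 2 / Real.sqrt (2 * Real.pi)) :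
    ∃! b : ℝ, 0 < b ∧ F b = E := by
  obtain ⟨c, hc⟩ := exists_millsRatio_eq hE0 (hE1.trans two_div_sqrt_two_pi_lt_millsRatio_zero)
  simp only [F_eq_iff_deficitGap_eq_zero]
  exact existsUnique_zero_of_strictAntiOn_of_strictMonoOn (continuous_deficitGap E).continuousOn
    (deficitGap_zero_pos hE1) ((deficitGap_strictAntiOn hc).mono Icc_subset_Iic_self)
    (deficitGap_strictMonoOn hc) (tendsto_deficitGap_atTop E)
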